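/- arXiv:2408.00028 — 3 statements merged into one kernel-verified Lean document; each statement's English description precedes it below -/
import Mathlib

section
/- For real s and real θ with s < θ + 1/2, the integral over ℚ_p of the function ξ ↦ (1 + |ξ|_p^2)^s · min(1, |ξ|_p^{-(2θ+2)}) with respect to Haar measure is finite. -/
open MeasureTheory Pointwise

section aux
variable {p : ℕ} [hp : Fact p.Prime]

private lemma digit_ex (y : ℚ_[p]) (hy : ‖y‖ ≤ 1) :
    ∃ k : ℕ, k < p ∧ ‖y - (k : ℚ_[p])‖ ≤ (p : ℝ)⁻¹ := by
  set z : ℤ_[p] := ⟨y, hy⟩ with hz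
  have hspec := z.appr_spec 1
  rw [← PadicInt.norm_le_pow_iff_mem_span_pow] at hspec
  refine ⟨z.appr 1, by simpa using z.appr_lt 1, ?_⟩
  have : ((z - (z.appr 1 : ℤ_[p]) : ℤ_[p]) : ℚ_[p]) = y - (z.appr 1 : ℚ_[p]) := by
    push_cast [hz]
    rfl
  rw [PadicInt.norm_def, this] at hspec
  simpa using hspec

private lemma ball_succ_eq (m : ℕ) :
    {x : ℚ_[p] | ‖x‖ ≤ (p : ℝ) ^ (m + 1)} =
      ⋃ k ∈ Finset.range p,
        ((k : ℚ_[p]) * (p : ℚ_[p]) ^ (-(m + 1 : ℤ))) +ᵥ {x : ℚ_[p] | ‖x‖ ≤ (p : ℝ) ^ m} := by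
  have hp1 : (1:ℝ) < p := by exact_mod_cast hp.out.one_lt
  have hp0 : (0:ℝ) < p := by positivity
  have hpq0 : (p : ℚ_[p]) ≠ 0 := by exact_mod_cast hp.out.ne_zero
  have hpx : (p : ℚ_[p]) ^ (-(m + 1 : ℤ)) * (p : ℚ_[p]) ^ (m + 1) = 1 := by
    rw [← zpow_natCast (p : ℚ_[p]) (m + 1), ← zpow_add₀ hpq0,
      show (-(m + 1 : ℤ) + ((m + 1 : ℕ) : ℤ)) = 0 by push_cast; ring, zpow_zero]
  ext x
  simp only [Set.mem_setOf_eq, Set.mem_iUnion, Finset.mem_range,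
    Set.mem_vadd_set_iff_neg_vadd_mem, vadd_eq_add, neg_add_eq_sub]
  constructor
  · intro hx
    set y : ℚ_[p] := (p : ℚ_[p]) ^ (m + 1) * x with hy
    have hyn : ‖y‖ ≤ 1 := by
      rw [hy, norm_mul, Padic.norm_p_pow]
      calc (p:ℝ) ^ (-(m+1:ℕ) : ℤ) * ‖x‖ ≤ (p:ℝ) ^ (-(m+1:ℕ) : ℤ) * (p:ℝ) ^ (m+1) := by
            gcongr
        _ = 1 := by
            rw [← zpow_natCast (p:ℝ) (m+1), ← zpow_add₀ (ne_of_gt hp0),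
              show (-(m+1:ℕ) + ((m + 1 : ℕ) : ℤ) : ℤ) = 0 by push_cast; ring, zpow_zero]
    obtain ⟨k, hk, hky⟩ := digit_ex y hyn
    refine ⟨k, hk, ?_⟩
    have hxk : x - (k : ℚ_[p]) * (p : ℚ_[p]) ^ (-(m + 1 : ℤ)) =
        (p : ℚ_[p]) ^ (-(m + 1 : ℤ)) * (y - k) := by
      rw [hy, mul_sub, ← mul_assoc, hpx, one_mul,
        mul_comm ((p : ℚ_[p]) ^ (-(m + 1 : ℤ))) (k : ℚ_[p])]
    rw [hxk, norm_mul, Padic.norm_p_zpow, neg_neg]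
    calc (p:ℝ) ^ (m + 1 : ℤ) * ‖y - k‖ ≤ (p:ℝ) ^ (m + 1 : ℤ) * (p:ℝ)⁻¹ := by
          gcongr
      _ = (p:ℝ) ^ m := by
          rw [← zpow_neg_one (p:ℝ), ← zpow_add₀ (ne_of_gt hp0), ← zpow_natCast (p:ℝ) m,
            show ((m : ℤ) + 1 + -1 : ℤ) = (m : ℤ) by ring]
  · rintro ⟨k, hk, hkx⟩
    have h1 : ‖(k : ℚ_[p]) * (p : ℚ_[p]) ^ (-(m + 1 : ℤ))‖ ≤ (p:ℝ) ^ (m+1) := by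
      rw [norm_mul, Padic.norm_p_zpow, neg_neg]
      calc ‖(k : ℚ_[p])‖ * (p:ℝ) ^ (m + 1 : ℤ) ≤ 1 * (p:ℝ) ^ (m + 1 : ℤ) := by
            gcongr
            exact_mod_cast Padic.norm_int_le_one (k : ℤ)
        _ = (p:ℝ) ^ (m+1) := by
            rw [one_mul, ← zpow_natCast (p:ℝ) (m+1)]
            norm_num
    have := Padic.nonarchimedean ((k : ℚ_[p]) * (p : ℚ_[p]) ^ (-(m + 1 : ℤ)))
      (x - (k : ℚ_[p]) * (p : ℚ_[p]) ^ (-(m + 1 : ℤ)))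
    simp only [add_sub_cancel] at this
    refine this.trans (max_le h1 (hkx.trans ?_))
    exact pow_le_pow_right₀ (le_of_lt hp1) (Nat.le_succ m)

end aux

open scoped ENNReal

section aux2
variable {p : ℕ} [hp : Fact p.Prime]

private lemma ball_measure [MeasurableSpace ℚ_[p]] [BorelSpace ℚ_[p]]
    (μ : Measure ℚ_[p]) [μ.IsAddHaarMeasure]
    (hμ : μ {x : ℚ_[p] | ‖x‖ ≤ 1} = 1) (m : ℕ) :
    μ {x : ℚ_[p] | ‖x‖ ≤ (p : ℝ) ^ m} = (p : ℝ≥0∞) ^ m := by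
  induction m with
  | zero => simpa using hμ
  | succ m ih =>
    have hmeas : MeasurableSet {x : ℚ_[p] | ‖x‖ ≤ (p : ℝ) ^ m} :=
      (isClosed_le continuous_norm continuous_const).measurableSet
    have hdisj : Set.Pairwise ↑(Finset.range p) (Function.onFun Disjoint fun k : ℕ =>
        ((k : ℚ_[p]) * (p : ℚ_[p]) ^ (-(m + 1 : ℤ))) +ᵥ
          {x : ℚ_[p] | ‖x‖ ≤ (p : ℝ) ^ m}) := by
      intro k hk l hl hkl
      simp only [Finset.coe_range, Set.mem_Iio] at hk hl
      rw [Function.onFun, Set.disjoint_left]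
      rintro x hxk hxl
      rw [Set.mem_vadd_set_iff_neg_vadd_mem, vadd_eq_add, neg_add_eq_sub,
        Set.mem_setOf_eq] at hxk hxl
      set c : ℕ → ℚ_[p] := fun k => (k : ℚ_[p]) * (p : ℚ_[p]) ^ (-(m + 1 : ℤ)) with hc
      have hsub : c k - c l = (((k : ℤ) - l : ℤ) : ℚ_[p]) * (p : ℚ_[p]) ^ (-(m + 1 : ℤ)) := by
        rw [hc]
        push_cast
        ring
      have hnd : ¬ ((p : ℤ) ∣ ((k : ℤ) - l)) := by
        intro hdvd
        have h0 : ((k : ℤ) - l) = 0 :=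
          Int.eq_zero_of_abs_lt_dvd hdvd (by rw [abs_lt]; omega)
        exact hkl (by omega)
      have hnorm1 : ‖(((k : ℤ) - l : ℤ) : ℚ_[p])‖ = 1 := by
        refine le_antisymm (Padic.norm_int_le_one _) ?_
        by_contra hlt
        push_neg at hlt
        exact hnd (Padic.norm_intCast_lt_one_iff.mp hlt)
      have hckl : ‖c k - c l‖ = (p : ℝ) ^ (m + 1) := by
        rw [hsub, norm_mul, hnorm1, one_mul, Padic.norm_p_zpow, neg_neg,
          ← zpow_natCast (p : ℝ) (m + 1)]
        norm_num
      have hle : ‖c k - c l‖ ≤ (p : ℝ) ^ m := by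
        have h2 : c k - c l = (x - c l) + (-(x - c k)) := by ring
        rw [h2]
        refine (Padic.nonarchimedean _ _).trans (max_le hxl ?_)
        rw [norm_neg]
        exact hxk
      have hp1 : (1:ℝ) < p := by exact_mod_cast hp.out.one_lt
      have : (p : ℝ) ^ (m + 1) ≤ (p : ℝ) ^ m := hckl ▸ hle
      exact absurd this (not_le.mpr (pow_lt_pow_right₀ hp1 (Nat.lt_succ_self m)))
    rw [ball_succ_eq m, measure_biUnion_finset hdisj
      (fun k _ => hmeas.const_vadd ((k : ℚ_[p]) * (p : ℚ_[p]) ^ (-(m + 1 : ℤ))))]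
    simp only [measure_vadd, ih, Finset.sum_const, Finset.card_range, nsmul_eq_mul]
    rw [pow_succ, mul_comm]

end aux2

/-- For s < θ + 1/2, ξ ↦ (1+|ξ|_p²)^s · min(1, |ξ|_p^{-(2θ+2)}) is integrable on ℚ_p. -/
theorem stmt_7 (p : ℕ) [Fact p.Prime]
    [MeasurableSpace ℚ_[p]] [BorelSpace ℚ_[p]]
    (μ : Measure ℚ_[p]) [μ.IsAddHaarMeasure]
    (hμ : μ {x : ℚ_[p] | ‖x‖ ≤ 1} = 1)
    (s θ : ℝ) (hs : s < θ + 1 / 2) :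
    Integrable (fun ξ : ℚ_[p] =>
      (1 + ‖ξ‖ ^ 2) ^ s * min 1 (‖ξ‖ ^ (-(2 * θ + 2)))) μ := by
  have hp1 : (1:ℝ) < p := by exact_mod_cast (Fact.out : p.Prime).one_lt
  have hp0 : (0:ℝ) < p := by positivity
  set f : ℚ_[p] → ℝ := fun ξ => (1 + ‖ξ‖ ^ 2) ^ s * min 1 (‖ξ‖ ^ (-(2 * θ + 2))) with hf
  set r : ℝ := 2 * s - (2 * θ + 2) with hr
  set C : ℝ := max 1 ((2:ℝ) ^ s) with hCdef
  have hC1 : (1:ℝ) ≤ C := le_max_left _ _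
  have hC0 : (0:ℝ) ≤ C := zero_le_one.trans hC1
  -- nonnegativity of f
  have hfnn : ∀ ξ, 0 ≤ f ξ := by
    intro ξ
    apply mul_nonneg (Real.rpow_nonneg (by positivity) s)
    exact le_min zero_le_one (Real.rpow_nonneg (norm_nonneg _) _)
  -- measurability
  have hmeasf : Measurable f := by
    apply Measurable.mul
    · exact (measurable_const.add ((measurable_norm (α := ℚ_[p])).pow_const 2)).pow
        measurable_const
    · exact measurable_const.min ((measurable_norm (α := ℚ_[p])).pow measurable_const)
  -- pointwise bound inside the unit ball
  have hball : ∀ ξ : ℚ_[p], ‖ξ‖ ≤ 1 → f ξ ≤ C := by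
    intro ξ hξ
    have hb1 : (1:ℝ) ≤ 1 + ‖ξ‖ ^ 2 := le_add_of_nonneg_right (by positivity)
    have hfac : (1 + ‖ξ‖ ^ 2) ^ s ≤ C := by
      rcases le_or_gt 0 s with h | h
      · refine le_trans (Real.rpow_le_rpow (by positivity) ?_ h) (le_max_right _ _)
        nlinarith [norm_nonneg ξ]
      · exact (Real.rpow_le_one_of_one_le_of_nonpos hb1 h.le).trans hC1
    calc f ξ ≤ C * 1 := by
          apply mul_le_mul hfac (min_le_left _ _) ?_ hC0
          exact le_min zero_le_one (Real.rpow_nonneg (norm_nonneg _) _)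
      _ = C := mul_one C
  -- pointwise bound outside the unit ball
  have hshell : ∀ ξ : ℚ_[p], 1 < ‖ξ‖ → f ξ ≤ C * ‖ξ‖ ^ r := by
    intro ξ hξ
    have hξ0 : (0:ℝ) < ‖ξ‖ := lt_trans one_pos hξ
    have hfac : (1 + ‖ξ‖ ^ 2) ^ s ≤ C * ‖ξ‖ ^ (2 * s) := by
      have hpow : ((‖ξ‖ ^ 2 : ℝ)) ^ s = ‖ξ‖ ^ (2 * s) := by
        rw [← Real.rpow_natCast ‖ξ‖ 2, ← Real.rpow_mul (norm_nonneg ξ)]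
        norm_num
      rcases le_or_gt 0 s with h | h
      · have h2 : 1 + ‖ξ‖ ^ 2 ≤ 2 * ‖ξ‖ ^ 2 := by nlinarith
        calc (1 + ‖ξ‖ ^ 2) ^ s ≤ (2 * ‖ξ‖ ^ 2) ^ s :=
              Real.rpow_le_rpow (by positivity) h2 h
          _ = 2 ^ s * (‖ξ‖ ^ 2) ^ s := Real.mul_rpow (by norm_num) (by positivity)
          _ ≤ C * ‖ξ‖ ^ (2 * s) := by
              rw [hpow]
              have hX := Real.rpow_nonneg (norm_nonneg ξ) (2 * s)
              have h2C : (2:ℝ) ^ s ≤ C := le_max_right _ _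
              nlinarith
      · calc (1 + ‖ξ‖ ^ 2) ^ s ≤ (‖ξ‖ ^ 2) ^ s :=
              Real.rpow_le_rpow_of_nonpos (pow_pos hξ0 2) (by nlinarith) h.le
          _ = ‖ξ‖ ^ (2 * s) := hpow
          _ ≤ C * ‖ξ‖ ^ (2 * s) := by
              nlinarith [Real.rpow_nonneg (norm_nonneg ξ) (2 * s), hC1]
    calc f ξ ≤ (C * ‖ξ‖ ^ (2 * s)) * ‖ξ‖ ^ (-(2 * θ + 2)) := by
          apply mul_le_mul hfac (min_le_right _ _)
            (le_min zero_le_one (Real.rpow_nonneg (norm_nonneg _) _))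
          positivity
      _ = C * ‖ξ‖ ^ r := by
          rw [mul_assoc, ← Real.rpow_add hξ0, hr]
          ring_nf
  -- now the integral
  refine ⟨hmeasf.aestronglyMeasurable, ?_⟩
  rw [hasFiniteIntegral_iff_norm]
  have hnormf : ∀ ξ, ENNReal.ofReal ‖f ξ‖ = ENNReal.ofReal (f ξ) := fun ξ => by
    rw [Real.norm_of_nonneg (hfnn ξ)]
  simp_rw [hnormf]
  set B0 : Set ℚ_[p] := {x : ℚ_[p] | ‖x‖ ≤ 1} with hB0
  have hB0m : MeasurableSet B0 := (isClosed_le continuous_norm continuous_const).measurableSet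
  rw [← lintegral_add_compl _ hB0m]
  have part1 : ∫⁻ x in B0, ENNReal.ofReal (f x) ∂μ ≤ ENNReal.ofReal C := by
    calc ∫⁻ x in B0, ENNReal.ofReal (f x) ∂μ ≤ ∫⁻ _ in B0, ENNReal.ofReal C ∂μ :=
        setLIntegral_mono measurable_const fun x hx => ENNReal.ofReal_le_ofReal (hball x hx)
      _ = ENNReal.ofReal C * μ B0 := setLIntegral_const _ _
      _ = ENNReal.ofReal C := by rw [hμ, mul_one]
  set S : ℕ → Set ℚ_[p] := fun n => {x : ℚ_[p] | ‖x‖ = (p:ℝ) ^ (n+1)} with hS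
  have hSm : ∀ n, MeasurableSet (S n) := fun n =>
    measurable_norm (measurableSet_singleton ((p:ℝ) ^ (n+1)))
  have hSgt : ∀ n, ∀ x ∈ S n, (1:ℝ) < ‖x‖ := by
    intro n x hx
    rw [hS] at hx
    rw [Set.mem_setOf_eq] at hx
    rw [hx]
    exact one_lt_pow₀ hp1 (Nat.succ_ne_zero n)
  have hcompl : B0ᶜ = ⋃ n : ℕ, S n := by
    ext x
    simp only [Set.mem_compl_iff, hB0, Set.mem_setOf_eq, not_le, Set.mem_iUnion, hS]
    constructor
    · intro hx
      have hx0 : x ≠ 0 := by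
        rintro rfl
        rw [norm_zero] at hx
        linarith
      have hval := Padic.norm_eq_zpow_neg_valuation hx0
      have hpos : 0 < -x.valuation := by
        by_contra hle
        push_neg at hle
        have : (p:ℝ) ^ (-x.valuation) ≤ (p:ℝ) ^ (0:ℤ) :=
          zpow_le_zpow_right₀ hp1.le hle
        rw [zpow_zero] at this
        rw [hval] at hx
        linarith
      refine ⟨(-x.valuation - 1).toNat, ?_⟩
      have hcast : (((-x.valuation - 1).toNat + 1 : ℕ) : ℤ) = -x.valuation := by
        omega
      rw [hval, ← zpow_natCast (p:ℝ), hcast]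
    · rintro ⟨n, hn⟩
      rw [hn]
      exact one_lt_pow₀ hp1 (Nat.succ_ne_zero n)
  have hdisj : Pairwise (Function.onFun Disjoint S) := by
    intro m n hmn
    rw [Function.onFun, Set.disjoint_left]
    rintro x hxm hxn
    rw [hS, Set.mem_setOf_eq] at hxm hxn
    have heq : (p:ℝ) ^ (m+1) = (p:ℝ) ^ (n+1) := by rw [← hxm, hxn]
    have hsm : StrictMono (fun k : ℕ => (p:ℝ) ^ k) := fun a b hab =>
      pow_lt_pow_right₀ hp1 hab
    exact hmn (Nat.succ_injective (hsm.injective heq))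
  have hSle : ∀ n, μ (S n) ≤ (p : ℝ≥0∞) ^ (n+1) := by
    intro n
    rw [← ball_measure μ hμ (n+1)]
    apply measure_mono
    intro x hx
    rw [hS, Set.mem_setOf_eq] at hx
    rw [Set.mem_setOf_eq, hx]
  set q : ℝ≥0∞ := ENNReal.ofReal ((p:ℝ) ^ r) * (p : ℝ≥0∞) with hq
  have hq1 : q < 1 := by
    have : q = ENNReal.ofReal ((p:ℝ) ^ (r + 1)) := by
      rw [hq, ← ENNReal.ofReal_natCast p,
        ← ENNReal.ofReal_mul (Real.rpow_nonneg hp0.le r)]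
      congr 1
      rw [Real.rpow_add hp0, Real.rpow_one]
    rw [this]
    rw [ENNReal.ofReal_lt_one]
    apply Real.rpow_lt_one_of_one_lt_of_neg hp1
    rw [hr]
    linarith
  have hqpow : ∀ n : ℕ, ((p:ℝ) ^ (n+1)) ^ r = ((p:ℝ) ^ r) ^ (n+1) := by
    intro n
    rw [← Real.rpow_natCast (p:ℝ) (n+1), ← Real.rpow_mul hp0.le, mul_comm,
      Real.rpow_mul hp0.le, Real.rpow_natCast]
  have hterm : ∀ n, ∫⁻ x in S n, ENNReal.ofReal (f x) ∂μ ≤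
      ENNReal.ofReal C * q ^ (n+1) := by
    intro n
    calc ∫⁻ x in S n, ENNReal.ofReal (f x) ∂μ
        ≤ ∫⁻ _ in S n, ENNReal.ofReal (C * ((p:ℝ) ^ (n+1)) ^ r) ∂μ := by
          refine setLIntegral_mono measurable_const fun x hx => ?_
          refine ENNReal.ofReal_le_ofReal ?_
          have := hshell x (hSgt n x hx)
          rw [hS, Set.mem_setOf_eq] at hx
          rw [← hx]
          exact this
      _ = ENNReal.ofReal (C * ((p:ℝ) ^ (n+1)) ^ r) * μ (S n) := setLIntegral_const _ _
      _ ≤ ENNReal.ofReal (C * ((p:ℝ) ^ (n+1)) ^ r) * (p : ℝ≥0∞) ^ (n+1) := by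
          exact mul_le_mul_right (hSle n) _
      _ = ENNReal.ofReal C * q ^ (n+1) := by
          rw [ENNReal.ofReal_mul hC0, hqpow n,
            ENNReal.ofReal_pow (Real.rpow_nonneg hp0.le r), hq, mul_pow, mul_assoc]
  have part2 : ∫⁻ x in B0ᶜ, ENNReal.ofReal (f x) ∂μ ≤
      ENNReal.ofReal C * (q * (1 - q)⁻¹) := by
    calc ∫⁻ x in B0ᶜ, ENNReal.ofReal (f x) ∂μ
        = ∑' n, ∫⁻ x in S n, ENNReal.ofReal (f x) ∂μ := by
          rw [hcompl, lintegral_iUnion hSm hdisj]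
      _ ≤ ∑' n, ENNReal.ofReal C * q ^ (n+1) := ENNReal.tsum_le_tsum hterm
      _ = ENNReal.ofReal C * ∑' n, q ^ (n+1) := ENNReal.tsum_mul_left
      _ = ENNReal.ofReal C * (q * (1 - q)⁻¹) := by rw [ENNReal.tsum_geometric_add_one]
  have hfin2 : ENNReal.ofReal C * (q * (1 - q)⁻¹) < ⊤ := by
    apply ENNReal.mul_lt_top ENNReal.ofReal_lt_top
    apply ENNReal.mul_lt_top (hq1.trans_le le_top)
    rw [ENNReal.inv_lt_top]
    exact tsub_pos_of_lt hq1
  exact ENNReal.add_lt_top.mpr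
    ⟨part1.trans_lt ENNReal.ofReal_lt_top, part2.trans_lt hfin2⟩
end

section
/- For every real s < −1/2, the integral ∫_{ℚ_p} (1 + |ξ|_p^2)^s dμ(ξ) is finite, where μ is the Haar measure with μ(ℤ_p) = 1. -/
open MeasureTheory Pointwise

section aux
variable (p : ℕ) [Fact p.Prime] [MeasurableSpace ℚ_[p]] [BorelSpace ℚ_[p]]
  (μ : Measure ℚ_[p]) [μ.IsAddHaarMeasure]

lemma measBall (hμ : μ {x : ℚ_[p] | ‖x‖ ≤ 1} = 1) (n : ℕ) :
    μ {x : ℚ_[p] | ‖x‖ ≤ (p : ℝ) ^ n} ≤ (p : ENNReal) ^ n := by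
  induction n with
  | zero => simpa using hμ.le
  | succ n ih =>
    have hsub : {x : ℚ_[p] | ‖x‖ ≤ (p : ℝ) ^ (n+1)} ⊆
        ⋃ a ∈ Finset.range p,
          ((a : ℚ_[p]) * (p : ℚ_[p]) ^ (-(n+1) : ℤ) +ᵥ {x : ℚ_[p] | ‖x‖ ≤ (p : ℝ) ^ n}) := by
      intro x hx
      simp only [Set.mem_setOf_eq] at hx
      have hp0 : (0:ℝ) < p := by exact_mod_cast (Fact.out (p := p.Prime)).pos
      have hpne : (p : ℚ_[p]) ≠ 0 := Nat.cast_ne_zero.mpr (Fact.out (p := p.Prime)).ne_zero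
      have hy : ‖x * (p : ℚ_[p]) ^ ((n+1 : ℕ) : ℤ)‖ ≤ 1 := by
        rw [norm_mul, Padic.norm_p_zpow]
        calc ‖x‖ * (p : ℝ) ^ (-((n+1 : ℕ) : ℤ)) ≤ (p : ℝ) ^ (n+1) * (p : ℝ) ^ (-((n+1 : ℕ) : ℤ)) := by
              apply mul_le_mul_of_nonneg_right hx (zpow_nonneg (by positivity) _)
          _ = 1 := by
              rw [← zpow_natCast ((p : ℝ)) (n+1), ← zpow_add₀ hp0.ne', add_neg_cancel, zpow_zero]
      set z : ℤ_[p] := ⟨x * (p : ℚ_[p]) ^ ((n+1 : ℕ) : ℤ), hy⟩ with hz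
      set a : ℕ := z.appr 1 with ha
      have haspec := PadicInt.appr_spec 1 z
      have halt : a < p := by simpa using PadicInt.appr_lt z 1
      have hnorm : ‖z - (a : ℤ_[p])‖ ≤ (p : ℝ)⁻¹ := by
        rw [Ideal.mem_span_singleton] at haspec
        obtain ⟨w, hw⟩ := haspec
        rw [hw, pow_one]
        calc ‖(p : ℤ_[p]) * w‖ ≤ ‖(p : ℤ_[p])‖ * ‖w‖ := norm_mul_le _ _
          _ ≤ ‖(p : ℤ_[p])‖ * 1 := mul_le_mul_of_nonneg_left w.norm_le_one (norm_nonneg _)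
          _ = (p : ℝ)⁻¹ := by rw [PadicInt.norm_p, mul_one]
      refine Set.mem_biUnion (Finset.mem_range.mpr halt) ?_
      rw [Set.mem_vadd_set_iff_neg_vadd_mem]
      simp only [Set.mem_setOf_eq, vadd_eq_add, neg_add_eq_sub]
      have hxz : x = (z : ℚ_[p]) * (p : ℚ_[p]) ^ (-(n+1) : ℤ) := by
        rw [hz]
        push_cast
        rw [mul_assoc, ← zpow_add₀ hpne,
          show ((n:ℤ)+1 + -((n:ℤ)+1)) = 0 by ring, zpow_zero, mul_one]
      have : x - (a : ℚ_[p]) * (p : ℚ_[p]) ^ (-(n+1) : ℤ)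
          = ((z - (a : ℤ_[p]) : ℤ_[p]) : ℚ_[p]) * (p : ℚ_[p]) ^ (-(n+1) : ℤ) := by
        rw [hxz]; push_cast; ring
      rw [this, norm_mul, Padic.norm_p_zpow]
      have h2 : ‖((z - (a : ℤ_[p]) : ℤ_[p]) : ℚ_[p])‖ ≤ (p : ℝ)⁻¹ := by
        rwa [PadicInt.norm_def] at hnorm
      calc ‖((z - (a : ℤ_[p]) : ℤ_[p]) : ℚ_[p])‖ * (p : ℝ) ^ (-(-(n+1) : ℤ))
          ≤ (p : ℝ)⁻¹ * (p : ℝ) ^ ((n+1 : ℕ) : ℤ) := by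
            apply mul_le_mul h2 ?_ (zpow_nonneg hp0.le _) (by positivity)
            rw [neg_neg]
            exact le_of_eq (by push_cast; ring_nf)
        _ = (p : ℝ) ^ n := by
            rw [← zpow_neg_one, ← zpow_add₀ hp0.ne']
            rw [show (-1 + ((n+1 : ℕ) : ℤ)) = (n : ℤ) by push_cast; ring, zpow_natCast]
    calc μ {x : ℚ_[p] | ‖x‖ ≤ (p : ℝ) ^ (n+1)}
        ≤ ∑ a ∈ Finset.range p, μ ((a : ℚ_[p]) * (p : ℚ_[p]) ^ (-(n+1) : ℤ) +ᵥ
            {x : ℚ_[p] | ‖x‖ ≤ (p : ℝ) ^ n}) :=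
          (measure_mono hsub).trans (measure_biUnion_finset_le _ _)
      _ = ∑ a ∈ Finset.range p, μ {x : ℚ_[p] | ‖x‖ ≤ (p : ℝ) ^ n} := by
          refine Finset.sum_congr rfl fun a _ => ?_
          exact measure_vadd _ _ _
      _ = (p : ENNReal) * μ {x : ℚ_[p] | ‖x‖ ≤ (p : ℝ) ^ n} := by
          simp [Finset.sum_const, mul_comm]
      _ ≤ (p : ENNReal) * (p : ENNReal) ^ n := by
          exact mul_le_mul_right ih _
      _ = (p : ENNReal) ^ (n + 1) := by ring

end aux

/-- For s < -1/2, ∫_{ℚ_p} (1+|ξ|_p²)^s dμ(ξ) is finite. -/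
theorem stmt_8 (p : ℕ) [Fact p.Prime]
    [MeasurableSpace ℚ_[p]] [BorelSpace ℚ_[p]]
    (μ : Measure ℚ_[p]) [μ.IsAddHaarMeasure]
    (hμ : μ {x : ℚ_[p] | ‖x‖ ≤ 1} = 1)
    (s : ℝ) (hs : s < -(1 / 2)) :
    Integrable (fun ξ : ℚ_[p] => (1 + ‖ξ‖ ^ 2) ^ s) μ := by
  have hp1 : (1:ℝ) < p := by exact_mod_cast (Fact.out (p := p.Prime)).one_lt
  have hp0 : (0:ℝ) < p := lt_trans one_pos hp1
  have hs0 : s ≤ 0 := le_trans hs.le (by norm_num)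
  -- positivity of the integrand base
  have hbase : ∀ ξ : ℚ_[p], (0:ℝ) < 1 + ‖ξ‖ ^ 2 := fun ξ => by positivity
  constructor
  · apply Continuous.aestronglyMeasurable
    apply Continuous.rpow_const
    · exact (continuous_const.add ((continuous_norm).pow 2))
    · exact fun ξ => Or.inl (hbase ξ).ne'
  · rw [hasFiniteIntegral_iff_norm]
    set B : ℕ → Set ℚ_[p] := fun n => {x : ℚ_[p] | ‖x‖ ≤ (p : ℝ) ^ n} with hB
    have hBmeas : ∀ n, MeasurableSet (B n) := fun n =>
      measurableSet_le continuous_norm.measurable measurable_const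
    set A : ℕ → Set ℚ_[p] := fun n => Nat.rec (B 0) (fun n _ => B (n+1) \ B n) n with hA
    have hA0 : A 0 = B 0 := rfl
    have hAsucc : ∀ n, A (n+1) = B (n+1) \ B n := fun n => rfl
    have hAmeas : ∀ n, MeasurableSet (A n) := by
      intro n; cases n with
      | zero => exact hBmeas 0
      | succ n => exact (hBmeas (n+1)).diff (hBmeas n)
    have hAB : ∀ n, A n ⊆ B n := by
      intro n; cases n with
      | zero => exact le_refl _
      | succ n => exact Set.diff_subset
    have hcover : (Set.univ : Set ℚ_[p]) = ⋃ n, A n := by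
      refine Set.eq_of_subset_of_subset (fun x _ => ?_) (Set.subset_univ _)
      have hex : ∃ n : ℕ, ‖x‖ ≤ (p:ℝ) ^ n := by
        obtain ⟨n, hn⟩ := pow_unbounded_of_one_lt ‖x‖ hp1
        exact ⟨n, hn.le⟩
      set N := Nat.find hex with hN
      have hspec : ‖x‖ ≤ (p:ℝ) ^ N := Nat.find_spec hex
      refine Set.mem_iUnion.mpr ⟨N, ?_⟩
      cases hNc : N with
      | zero => rw [hA0]; rw [hNc] at hspec; exact hspec
      | succ m =>
        rw [hAsucc]
        refine ⟨by rw [hNc] at hspec; exact hspec, ?_⟩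
        intro hmem
        exact Nat.find_min hex (by omega) hmem
    -- value bound on A n
    have hval : ∀ n : ℕ, ∀ ξ ∈ A n,
        ENNReal.ofReal ‖(1 + ‖ξ‖ ^ 2) ^ s‖ ≤
          ENNReal.ofReal ((p:ℝ) ^ ((2*(n:ℝ) - 2) * s)) := by
      intro n ξ hξ
      have hlow : (p:ℝ) ^ (2*(n:ℝ) - 2) ≤ 1 + ‖ξ‖ ^ 2 := by
        cases n with
        | zero =>
          have : (p:ℝ) ^ (2*((0:ℕ):ℝ) - 2) ≤ 1 :=
            Real.rpow_le_one_of_one_le_of_nonpos hp1.le (by norm_num)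
          refine this.trans ?_
          nlinarith [sq_nonneg ‖ξ‖]
        | succ m =>
          have hξ2 : (p:ℝ) ^ m < ‖ξ‖ := by
            have := hξ.2
            simp only [hB, Set.mem_setOf_eq, not_le] at this
            exact this
          have hpow : (p:ℝ) ^ (2*((m+1:ℕ):ℝ) - 2) = ((p:ℝ) ^ m) ^ 2 := by
            rw [show 2*((m+1:ℕ):ℝ) - 2 = ((m*2 : ℕ):ℝ) by push_cast; ring,
              Real.rpow_natCast, pow_mul]
          rw [hpow]
          nlinarith [pow_pos hp0 m]
      have h1 : (1 + ‖ξ‖ ^ 2) ^ s ≤ ((p:ℝ) ^ (2*(n:ℝ) - 2)) ^ s :=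
        Real.rpow_le_rpow_of_nonpos (Real.rpow_pos_of_pos hp0 _) hlow hs0
      rw [Real.norm_of_nonneg (Real.rpow_nonneg (hbase ξ).le _)]
      refine ENNReal.ofReal_le_ofReal (h1.trans (le_of_eq ?_))
      rw [← Real.rpow_mul hp0.le]
    -- measure bound
    have hAμ : ∀ n, μ (A n) ≤ (p : ENNReal) ^ n := fun n =>
      (measure_mono (hAB n)).trans (measBall p μ hμ n)
    -- reorganize integrand
    set r : ℝ := (p:ℝ) ^ (1 + 2*s) with hr
    have hr0 : 0 ≤ r := (Real.rpow_pos_of_pos hp0 _).le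
    have hr1 : r < 1 := Real.rpow_lt_one_of_one_lt_of_neg hp1 (by linarith)
    have hterm : ∀ n : ℕ,
        (p : ENNReal) ^ n * ENNReal.ofReal ((p:ℝ) ^ ((2*(n:ℝ) - 2) * s)) ≤
          ENNReal.ofReal ((p:ℝ) ^ (-2*s)) * (ENNReal.ofReal r) ^ n := by
      intro n
      have h1 : (p : ENNReal) ^ n = ENNReal.ofReal ((p:ℝ) ^ n) := by
        rw [ENNReal.ofReal_pow hp0.le, ENNReal.ofReal_natCast]
      rw [h1, ← ENNReal.ofReal_pow hr0, ← ENNReal.ofReal_mul (pow_nonneg hp0.le _),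
        ← ENNReal.ofReal_mul (Real.rpow_nonneg hp0.le _)]
      refine ENNReal.ofReal_le_ofReal (le_of_eq ?_)
      rw [← Real.rpow_natCast (p:ℝ) n, ← Real.rpow_add hp0, hr,
        ← Real.rpow_natCast ((p:ℝ) ^ (1 + 2*s)) n, ← Real.rpow_mul hp0.le,
        ← Real.rpow_add hp0]
      ring_nf
    calc ∫⁻ ξ, ENNReal.ofReal ‖(1 + ‖ξ‖ ^ 2) ^ s‖ ∂μ
        = ∫⁻ ξ in ⋃ n, A n, ENNReal.ofReal ‖(1 + ‖ξ‖ ^ 2) ^ s‖ ∂μ := by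
          rw [← hcover, Measure.restrict_univ]
      _ ≤ ∑' n, ∫⁻ ξ in A n, ENNReal.ofReal ‖(1 + ‖ξ‖ ^ 2) ^ s‖ ∂μ :=
          lintegral_iUnion_le _ _
      _ ≤ ∑' n, ENNReal.ofReal ((p:ℝ) ^ (-2*s)) * (ENNReal.ofReal r) ^ n := by
          refine ENNReal.tsum_le_tsum fun n => ?_
          calc ∫⁻ ξ in A n, ENNReal.ofReal ‖(1 + ‖ξ‖ ^ 2) ^ s‖ ∂μ
              ≤ ∫⁻ _ in A n, ENNReal.ofReal ((p:ℝ) ^ ((2*(n:ℝ) - 2) * s)) ∂μ :=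
                setLIntegral_mono' (hAmeas n) (hval n)
            _ = ENNReal.ofReal ((p:ℝ) ^ ((2*(n:ℝ) - 2) * s)) * μ (A n) := by
                rw [setLIntegral_const]
            _ ≤ ENNReal.ofReal ((p:ℝ) ^ ((2*(n:ℝ) - 2) * s)) * (p : ENNReal) ^ n :=
                mul_le_mul_right (hAμ n) _
            _ ≤ ENNReal.ofReal ((p:ℝ) ^ (-2*s)) * (ENNReal.ofReal r) ^ n := by
                rw [mul_comm]; exact hterm n
      _ = ENNReal.ofReal ((p:ℝ) ^ (-2*s)) * ∑' n, (ENNReal.ofReal r) ^ n :=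
          ENNReal.tsum_mul_left
      _ < ⊤ := by
          apply ENNReal.mul_lt_top ENNReal.ofReal_lt_top
          rw [ENNReal.tsum_geometric]
          exact ENNReal.inv_lt_top.mpr (tsub_pos_of_lt (ENNReal.ofReal_lt_one.mpr hr1))
end

section
/- For every real s ≥ −1/2, the integral ∫_{ℚ_p} (1 + |ξ|_p^2)^s dμ(ξ) is infinite (i.e., the function ξ ↦ (1+|ξ|_p^2)^s is not integrable on ℚ_p). -/
open MeasureTheory
open scoped ENNReal


variable {p : ℕ} [hp : Fact p.Prime]

lemma aux_ball_decomp (k : ℕ) :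
    {x : ℚ_[p] | ‖x‖ ≤ (p:ℝ)^(k+1)} =
      ⋃ j ∈ Finset.range p,
        (fun x : ℚ_[p] => x - (j:ℚ_[p]) * (p:ℚ_[p])^(-(k+1:ℤ))) ⁻¹'
          {x : ℚ_[p] | ‖x‖ ≤ (p:ℝ)^k} := by
  have hp1 : (1:ℝ) < p := Nat.one_lt_cast.2 hp.out.one_lt
  have hp0 : (0:ℝ) < p := by positivity
  ext x
  simp only [Set.mem_setOf_eq, Set.mem_iUnion, Set.mem_preimage, Finset.mem_range]
  constructor
  · intro hx
    have hz : ‖x * (p:ℚ_[p])^((k+1:ℕ):ℤ)‖ ≤ 1 := by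
      rw [norm_mul, Padic.norm_p_zpow]
      calc ‖x‖ * (p:ℝ)^(-((k+1:ℕ):ℤ)) ≤ (p:ℝ)^(k+1) * (p:ℝ)^(-((k+1:ℕ):ℤ)) := by
            apply mul_le_mul_of_nonneg_right hx (by positivity)
        _ = 1 := by
            rw [← zpow_natCast (p:ℝ) (k+1), ← zpow_add₀ (ne_of_gt hp0),
              add_neg_cancel, zpow_zero]
    set w : ℤ_[p] := ⟨x * (p:ℚ_[p])^((k+1:ℕ):ℤ), hz⟩ with hw
    have hmem : w - (w.zmodRepr : ℤ_[p]) ∈ Ideal.span {(p:ℤ_[p])} := by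
      rw [← PadicInt.maximalIdeal_eq_span_p]; exact PadicInt.sub_zmodRepr_mem w
    obtain ⟨u, hu⟩ := Ideal.mem_span_singleton.1 hmem
    refine ⟨w.zmodRepr, PadicInt.zmodRepr_lt_p w, ?_⟩
    have hxw : x - (w.zmodRepr : ℚ_[p]) * (p:ℚ_[p])^(-(k+1:ℤ)) =
        ((w - (w.zmodRepr : ℤ_[p]) : ℤ_[p]) : ℚ_[p]) * (p:ℚ_[p])^(-(k+1:ℤ)) := by
      push_cast
      rw [sub_mul, mul_assoc, ← zpow_add₀ (by exact_mod_cast hp.out.ne_zero : (p:ℚ_[p]) ≠ 0),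
        Nat.cast_add, Nat.cast_one, add_neg_cancel, zpow_zero, mul_one]
    rw [hxw, hu]
    push_cast
    rw [norm_mul, norm_mul, Padic.norm_p_zpow, Padic.norm_p]
    have hu1 : ‖(u : ℚ_[p])‖ ≤ 1 := u.2
    calc (p:ℝ)⁻¹ * ‖(u:ℚ_[p])‖ * (p:ℝ)^(-(-(k+1:ℤ)))
        ≤ (p:ℝ)⁻¹ * 1 * (p:ℝ)^((k+1:ℤ)) := by
          apply mul_le_mul_of_nonneg_right _ (by positivity)
          · exact mul_le_mul_of_nonneg_left hu1 (by positivity)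
      _ = (p:ℝ)^(k:ℤ) := by
          rw [← zpow_neg_one (p:ℝ), mul_one, ← zpow_add₀ (ne_of_gt hp0)]
          norm_num
      _ = (p:ℝ)^k := by exact_mod_cast zpow_natCast (p:ℝ) k
  · rintro ⟨j, hj, hxj⟩
    have h1 : ‖(j:ℚ_[p]) * (p:ℚ_[p])^(-(k+1:ℤ))‖ ≤ (p:ℝ)^(k+1) := by
      rw [norm_mul, Padic.norm_p_zpow]
      have : ‖((j:ℤ):ℚ_[p])‖ ≤ 1 := Padic.norm_int_le_one _
      push_cast at this
      calc ‖(j:ℚ_[p])‖ * (p:ℝ)^(-(-(k+1:ℤ))) ≤ 1 * (p:ℝ)^((k+1:ℤ)) := by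
            apply mul_le_mul this (by norm_num) (by positivity) (by norm_num)
        _ = (p:ℝ)^(k+1) := by rw [one_mul]; exact_mod_cast zpow_natCast (p:ℝ) (k+1)
    calc ‖x‖ = ‖(x - (j:ℚ_[p]) * (p:ℚ_[p])^(-(k+1:ℤ))) + (j:ℚ_[p]) * (p:ℚ_[p])^(-(k+1:ℤ))‖ := by
          ring_nf
      _ ≤ max ‖x - (j:ℚ_[p]) * (p:ℚ_[p])^(-(k+1:ℤ))‖ ‖(j:ℚ_[p]) * (p:ℚ_[p])^(-(k+1:ℤ))‖ :=
          Padic.nonarchimedean _ _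
      _ ≤ (p:ℝ)^(k+1) := max_le (le_trans hxj (by
            apply pow_le_pow_right₀ (le_of_lt hp1) (Nat.le_succ k))) h1

lemma aux_disj (k : ℕ) :
    Set.PairwiseDisjoint (Finset.range p : Set ℕ)
      (fun j : ℕ => (fun x : ℚ_[p] => x - (j:ℚ_[p]) * (p:ℚ_[p])^(-(k+1:ℤ))) ⁻¹'
        {x : ℚ_[p] | ‖x‖ ≤ (p:ℝ)^k}) := by
  have hp1 : (1:ℝ) < p := Nat.one_lt_cast.2 hp.out.one_lt
  have hp0 : (0:ℝ) < p := by positivity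
  intro j hj j' hj' hne
  simp only [Finset.coe_range, Set.mem_Iio] at hj hj'
  refine Set.disjoint_left.2 fun x hx hx' => ?_
  simp only [Set.mem_preimage, Set.mem_setOf_eq] at hx hx'
  have key : ‖((j:ℚ_[p]) - (j':ℚ_[p])) * (p:ℚ_[p])^(-(k+1:ℤ))‖ ≤ (p:ℝ)^k := by
    have heq : ((j:ℚ_[p]) - (j':ℚ_[p])) * (p:ℚ_[p])^(-(k+1:ℤ)) =
        (x - (j':ℚ_[p]) * (p:ℚ_[p])^(-(k+1:ℤ))) +
        (-(x - (j:ℚ_[p]) * (p:ℚ_[p])^(-(k+1:ℤ)))) := by ring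
    rw [heq]
    refine le_trans (Padic.nonarchimedean _ _) (max_le hx' ?_)
    rwa [norm_neg]
  have hnorm1 : ‖((j:ℚ_[p]) - (j':ℚ_[p]))‖ = 1 := by
    obtain ⟨d, hd⟩ : ∃ d : ℤ, d = (j:ℤ) - (j':ℤ) := ⟨_, rfl⟩
    have h1 : ‖(d:ℚ_[p])‖ ≤ 1 := Padic.norm_int_le_one d
    have h2 : ¬ ‖(d:ℚ_[p])‖ < 1 := by
      rw [Padic.norm_intCast_lt_one_iff]
      intro hdvd
      have := Int.eq_zero_of_abs_lt_dvd hdvd (by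
        rw [hd, abs_sub_lt_iff]; omega)
      omega
    have hdq : (d : ℚ_[p]) = (j:ℚ_[p]) - (j':ℚ_[p]) := by rw [hd]; push_cast; ring
    rw [hdq] at h1 h2
    linarith [lt_or_eq_of_le h1]
  rw [norm_mul, hnorm1, one_mul, Padic.norm_p_zpow, neg_neg] at key
  have : (p:ℝ)^(k:ℤ) < (p:ℝ)^(k+1:ℤ) := by
    apply zpow_lt_zpow_right₀ hp1; omega
  have hcast : ((k:ℤ)+1) = ((k+1:ℕ):ℤ) := by push_cast; ring
  rw [hcast, zpow_natCast, zpow_natCast] at this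
  rw [hcast, zpow_natCast] at key
  linarith

lemma aux_ball_meas [MeasurableSpace ℚ_[p]] [BorelSpace ℚ_[p]] (r : ℝ) :
    MeasurableSet {x : ℚ_[p] | ‖x‖ ≤ r} :=
  (isClosed_le continuous_norm continuous_const).measurableSet

lemma aux_ball_measure [MeasurableSpace ℚ_[p]] [BorelSpace ℚ_[p]]
    (μ : Measure ℚ_[p]) [μ.IsAddHaarMeasure]
    (hμ : μ {x : ℚ_[p] | ‖x‖ ≤ 1} = 1) (k : ℕ) :
    μ {x : ℚ_[p] | ‖x‖ ≤ (p:ℝ)^k} = (p:ℝ≥0∞)^k := by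
  induction k with
  | zero => simpa using hμ
  | succ k ih =>
    rw [aux_ball_decomp k, measure_biUnion_finset (aux_disj k)
      (fun j _ => (aux_ball_meas _).preimage (measurable_id.sub_const _))]
    have htr : ∀ j : ℕ, μ ((fun x : ℚ_[p] => x - (j:ℚ_[p]) * (p:ℚ_[p])^(-(k+1:ℤ))) ⁻¹'
        {x : ℚ_[p] | ‖x‖ ≤ (p:ℝ)^k}) = (p:ℝ≥0∞)^k := by
      intro j
      have : (fun x : ℚ_[p] => x - (j:ℚ_[p]) * (p:ℚ_[p])^(-(k+1:ℤ))) =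
          (fun x : ℚ_[p] => x + (-((j:ℚ_[p]) * (p:ℚ_[p])^(-(k+1:ℤ))))) := by
        funext x; ring
      rw [this, measure_preimage_add_right, ih]
    simp only [htr, Finset.sum_const, Finset.card_range, nsmul_eq_mul]
    rw [pow_succ]
    ring

/-- For s ≥ -1/2, ξ ↦ (1+|ξ|_p²)^s is not integrable on ℚ_p. -/
theorem stmt_9 (p : ℕ) [Fact p.Prime]
    [MeasurableSpace ℚ_[p]] [BorelSpace ℚ_[p]]
    (μ : Measure ℚ_[p]) [μ.IsAddHaarMeasure]
    (hμ : μ {x : ℚ_[p] | ‖x‖ ≤ 1} = 1)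
    (s : ℝ) (hs : -(1 / 2) ≤ s) :
    ¬ Integrable (fun ξ : ℚ_[p] => (1 + ‖ξ‖ ^ 2) ^ s) μ := by
  intro hint
  have hp1 : (1:ℝ) < p := Nat.one_lt_cast.2 (Fact.out : p.Prime).one_lt
  have hp0 : (0:ℝ) < p := by positivity
  set B : ℕ → Set ℚ_[p] := fun k => {x | ‖x‖ ≤ (p:ℝ)^k} with hBdef
  set A : ℕ → Set ℚ_[p] := fun k => B (k+1) \ B k with hAdef
  have hBmeas : ∀ k, MeasurableSet (B k) := fun k => aux_ball_meas _
  have hAmeas : ∀ k, MeasurableSet (A k) := fun k => (hBmeas _).diff (hBmeas _)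
  have hBmono : ∀ {k l : ℕ}, k ≤ l → B k ⊆ B l := by
    intro k l hkl x hx
    exact le_trans hx (pow_le_pow_right₀ (le_of_lt hp1) hkl)
  have hBμ : ∀ k, μ (B k) = (p:ℝ≥0∞)^k := aux_ball_measure μ hμ
  have hBfin : ∀ k, μ (B k) ≠ ⊤ := by
    intro k; rw [hBμ]
    exact ENNReal.pow_ne_top (ENNReal.natCast_ne_top p)
  have hAμ : ∀ k, μ (A k) = ENNReal.ofReal ((p:ℝ)^(k+1) - (p:ℝ)^k) := by
    intro k
    rw [hAdef]
    rw [measure_diff (hBmono (Nat.le_succ k)) (hBmeas k).nullMeasurableSet (hBfin k),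
      hBμ, hBμ]
    have : ∀ m : ℕ, (p:ℝ≥0∞)^m = ENNReal.ofReal ((p:ℝ)^m) := by
      intro m
      rw [ENNReal.ofReal_pow (le_of_lt hp0), ENNReal.ofReal_natCast]
    rw [this, this, ENNReal.ofReal_sub _ (by positivity)]
  have hAdisj : Pairwise (Function.onFun Disjoint A) := by
    have key : ∀ {k l : ℕ}, k < l → Disjoint (A k) (A l) := by
      intro k l hkl
      refine Set.disjoint_left.2 fun x hxk hxl => ?_
      exact hxl.2 (hBmono hkl hxk.1)
    intro k l hne
    rcases hne.lt_or_gt with h | h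
    · exact key h
    · exact (key h).symm
  -- pointwise lower bound on A k
  have hlow : ∀ k : ℕ, ∀ x ∈ A k,
      ENNReal.ofReal ((2:ℝ)^(-(1/2):ℝ) * ((p:ℝ)^(k+1))⁻¹) ≤
        (‖(1 + ‖x‖ ^ 2) ^ s‖₊ : ℝ≥0∞) := by
    intro k x hx
    have hxle : ‖x‖ ≤ (p:ℝ)^(k+1) := hx.1
    have h1 : (1:ℝ) ≤ 1 + ‖x‖^2 := le_add_of_nonneg_right (sq_nonneg _)
    have hfpos : (0:ℝ) < (1 + ‖x‖ ^ 2) ^ s := Real.rpow_pos_of_pos (by positivity) s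
    have ha : (1 + ‖x‖^2) ^ (-(1/2):ℝ) ≤ (1 + ‖x‖^2) ^ s :=
      Real.rpow_le_rpow_of_exponent_le h1 hs
    have hb : (2:ℝ)^(-(1/2):ℝ) * ((p:ℝ)^(k+1))⁻¹ ≤ (1 + ‖x‖^2) ^ (-(1/2):ℝ) := by
      have h2 : 1 + ‖x‖^2 ≤ 2 * ((p:ℝ)^(k+1))^2 := by
        have h3 : ‖x‖^2 ≤ ((p:ℝ)^(k+1))^2 := by
          apply sq_le_sq' _ hxle
          have := norm_nonneg x
          nlinarith
        have h4 : (1:ℝ) ≤ ((p:ℝ)^(k+1))^2 := by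
          have : (1:ℝ) ≤ (p:ℝ)^(k+1) := one_le_pow₀ (le_of_lt hp1)
          nlinarith
        nlinarith
      calc (2:ℝ)^(-(1/2):ℝ) * ((p:ℝ)^(k+1))⁻¹
          = (2 * ((p:ℝ)^(k+1))^2) ^ (-(1/2):ℝ) := by
            rw [Real.mul_rpow (by norm_num) (by positivity)]
            congr 1
            rw [← Real.rpow_natCast ((p:ℝ)^(k+1)) 2, ← Real.rpow_mul (by positivity)]
            norm_num
            rw [Real.rpow_neg_one]
        _ ≤ (1 + ‖x‖^2) ^ (-(1/2):ℝ) :=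
            Real.rpow_le_rpow_of_nonpos (by positivity) h2 (by norm_num)
    rw [← enorm_eq_nnnorm, ← ofReal_norm, Real.norm_of_nonneg (le_of_lt hfpos)]
    exact ENNReal.ofReal_le_ofReal (le_trans hb ha)
  -- the set integral lower bound
  set c0 : ℝ≥0∞ := ENNReal.ofReal ((2:ℝ)^(-(1/2):ℝ) * (1 - (p:ℝ)⁻¹)) with hc0
  have hterm : ∀ k : ℕ, c0 ≤ ∫⁻ x in A k, ‖(1 + ‖x‖ ^ 2) ^ s‖₊ ∂μ := by
    intro k
    have := setLIntegral_mono' (μ := μ) (s := A k)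
      (f := fun _ => ENNReal.ofReal ((2:ℝ)^(-(1/2):ℝ) * ((p:ℝ)^(k+1))⁻¹))
      (g := fun x => (‖(1 + ‖x‖ ^ 2) ^ s‖₊ : ℝ≥0∞)) (hAmeas k) (hlow k)
    refine le_trans ?_ this
    rw [setLIntegral_const, hAμ k, ← ENNReal.ofReal_mul (by positivity)]
    apply le_of_eq
    rw [hc0]
    congr 1
    have hpk : ((p:ℝ)^(k+1)) ≠ 0 := by positivity
    field_simp
    ring
  have hfin : (∫⁻ x, ‖(1 + ‖x‖ ^ 2) ^ s‖₊ ∂μ) < ⊤ := hint.2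
  have htop : (⊤:ℝ≥0∞) ≤ ∫⁻ x, ‖(1 + ‖x‖ ^ 2) ^ s‖₊ ∂μ := by
    have hc0ne : c0 ≠ 0 := by
      rw [hc0]
      apply ne_of_gt
      apply ENNReal.ofReal_pos.2
      have h2 : (0:ℝ) < (2:ℝ)^(-(1/2):ℝ) := Real.rpow_pos_of_pos (by norm_num) _
      have h3 : (p:ℝ)⁻¹ < 1 := by
        rw [inv_lt_one_iff₀]; right; exact hp1
      nlinarith
    calc (⊤:ℝ≥0∞) = ∑' _ : ℕ, c0 := (ENNReal.tsum_const_eq_top_of_ne_zero hc0ne).symm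
      _ ≤ ∑' k, ∫⁻ x in A k, ‖(1 + ‖x‖ ^ 2) ^ s‖₊ ∂μ := ENNReal.tsum_le_tsum hterm
      _ = ∫⁻ x in ⋃ k, A k, ‖(1 + ‖x‖ ^ 2) ^ s‖₊ ∂μ :=
          (lintegral_iUnion hAmeas hAdisj _).symm
      _ ≤ ∫⁻ x, ‖(1 + ‖x‖ ^ 2) ^ s‖₊ ∂μ := setLIntegral_le_lintegral _ _
  exact absurd hfin (not_lt.2 htop)
end
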